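/- arXiv:1809.11143 — 3 statements merged into one kernel-verified Lean document; each statement's English description precedes it below -/
import Mathlib

section
/- Let P be a probability distribution on a finite alphabet X and let Q ∈ 𝒫_n(X) be a type. If X^n is sampled i.i.d. from P, then (n+1)^{-|X|} · exp(-n·D(Q‖P)) ≤ Pr[the sample has type Q] ≤ exp(-n·D(Q‖P)), where D(Q‖P) = ∑_x Q(x) log(Q(x)/P(x)) is the Kullback–Leibler divergence. -/
open Finset

/-- `(l+k)! ≤ l! * (l+k)^k`. -/
lemma aux_factorial_le (l k : ℕ) : (l + k).factorial ≤ l.factorial * (l + k) ^ k := by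
  induction k with
  | zero => simp
  | succ k ih =>
    have h1 : (l + (k + 1)).factorial = (l + k + 1) * (l + k).factorial := by
      rw [← Nat.add_assoc]; exact Nat.factorial_succ _
    calc (l + (k + 1)).factorial = (l + k + 1) * (l + k).factorial := h1
      _ ≤ (l + k + 1) * (l.factorial * (l + k) ^ k) := Nat.mul_le_mul_left _ ih
      _ ≤ (l + k + 1) * (l.factorial * (l + k + 1) ^ k) := by
          exact Nat.mul_le_mul_left _ (Nat.mul_le_mul_left _
            (Nat.pow_le_pow_left (Nat.le_succ _) k))
      _ = l.factorial * (l + (k + 1)) ^ (k + 1) := by ring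
  
/-- Key factorial inequality: `m! * m^l ≤ l! * m^m`. -/
lemma nat_key (m l : ℕ) : m.factorial * m ^ l ≤ l.factorial * m ^ m := by
  rcases le_total l m with h | h
  · obtain ⟨k, rfl⟩ := Nat.exists_eq_add_of_le h
    calc (l + k).factorial * (l + k) ^ l
        ≤ (l.factorial * (l + k) ^ k) * (l + k) ^ l :=
          Nat.mul_le_mul_right _ (aux_factorial_le l k)
      _ = l.factorial * (l + k) ^ (l + k) := by rw [mul_assoc, ← pow_add, add_comm k l]
  · obtain ⟨k, rfl⟩ := Nat.exists_eq_add_of_le h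
    have h1 : m.factorial * m ^ k ≤ (m + k).factorial :=
      le_trans (Nat.mul_le_mul_left _ (Nat.pow_le_pow_left (Nat.le_succ m) k))
        (Nat.factorial_mul_pow_le_factorial)
    calc m.factorial * m ^ (m + k) = (m.factorial * m ^ k) * m ^ m := by ring
      _ ≤ (m + k).factorial * m ^ m := Nat.mul_le_mul_right _ h1

/-- Max-likelihood comparison in `ℕ`. -/
lemma nat_maxlike {X : Type*} [Fintype X] (c b : X → ℕ) (n N Nb : ℕ)
    (h1 : N * ∏ a, (c a).factorial = n.factorial)
    (h2 : Nb * ∏ a, (b a).factorial = n.factorial) :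
    Nb * ∏ a, c a ^ b a ≤ N * ∏ a, c a ^ c a := by
  have hpos : 0 < (∏ a, (c a).factorial) * ∏ a, (b a).factorial := by
    apply Nat.mul_pos <;> exact Finset.prod_pos fun a _ => Nat.factorial_pos _
  apply Nat.le_of_mul_le_mul_right _ hpos
  calc Nb * (∏ a, c a ^ b a) * ((∏ a, (c a).factorial) * ∏ a, (b a).factorial)
      = (Nb * ∏ a, (b a).factorial) * ∏ a, ((c a).factorial * c a ^ b a) := by
        rw [Finset.prod_mul_distrib]; ring
    _ = n.factorial * ∏ a, ((c a).factorial * c a ^ b a) := by rw [h2]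
    _ ≤ n.factorial * ∏ a, ((b a).factorial * c a ^ c a) :=
        Nat.mul_le_mul_left _ (Finset.prod_le_prod' fun a _ => nat_key _ _)
    _ = (N * ∏ a, (c a).factorial) * ∏ a, ((b a).factorial * c a ^ c a) := by rw [h1]
    _ = N * (∏ a, c a ^ c a) * ((∏ a, (c a).factorial) * ∏ a, (b a).factorial) := by
        rw [Finset.prod_mul_distrib]; ring

/-- Counting lemma: the type class of `c` has `n!/∏ (c a)!` elements. -/
lemma count_lemma {X : Type*} [Fintype X] [DecidableEq X] (n : ℕ) (c : X → ℕ)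
    (hc : ∑ a, c a = n) :
    (Finset.univ.filter (fun x : Fin n → X => ∀ a, ((Finset.univ : Finset (Fin n)).filter
      (fun i => x i = a)).card = c a)).card * ∏ a, (c a).factorial = n.factorial := by
  classical
  set T := Finset.univ.filter (fun x : Fin n → X => ∀ a, ((Finset.univ : Finset (Fin n)).filter
      (fun i => x i = a)).card = c a) with hT
  have hcard : Fintype.card (Fin n) = Fintype.card (Σ a : X, Fin (c a)) := by
    simp [Fintype.card_sigma, hc]
  let e : Fin n ≃ Σ a : X, Fin (c a) := Fintype.equivOfCardEq hcard
  let x₀ : Fin n → X := fun i => (e i).1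
  have hx₀ : ∀ a, ((Finset.univ : Finset (Fin n)).filter (fun i => x₀ i = a)).card = c a := by
    intro a
    rw [← Fintype.card_subtype]
    have e2 : {i : Fin n // x₀ i = a} ≃ {s : Σ b : X, Fin (c b) // s.1 = a} :=
      e.subtypeEquiv (fun i => Iff.rfl)
    have e3 : {s : Σ b : X, Fin (c b) // s.1 = a} ≃ Fin (c a) :=
      { toFun := fun s => Fin.cast (congrArg c s.2) s.1.2
        invFun := fun j => ⟨⟨a, j⟩, rfl⟩
        left_inv := fun s => by rcases s with ⟨⟨b, j⟩, h⟩; subst h; rfl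
        right_inv := fun j => rfl }
    rw [Fintype.card_congr (e2.trans e3), Fintype.card_fin]
  have fiber_card_comp : ∀ (x : Fin n → X) (σ : Equiv.Perm (Fin n)) (a : X),
      ((Finset.univ : Finset (Fin n)).filter (fun i => x (σ i) = a)).card =
      ((Finset.univ : Finset (Fin n)).filter (fun i => x i = a)).card := by
    intro x σ a
    rw [← Fintype.card_subtype, ← Fintype.card_subtype]
    exact Fintype.card_congr (σ.subtypeEquiv fun i => Iff.rfl)
  have hmaps : ∀ σ ∈ (Finset.univ : Finset (Equiv.Perm (Fin n))), x₀ ∘ σ ∈ T := by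
    intro σ _
    simp only [hT, Finset.mem_filter, Finset.mem_univ, true_and]
    intro a
    have : ((Finset.univ : Finset (Fin n)).filter (fun i => (x₀ ∘ ⇑σ) i = a)).card =
        ((Finset.univ : Finset (Fin n)).filter (fun i => x₀ (σ i) = a)).card := rfl
    rw [this, fiber_card_comp, hx₀]
  have hsplit := Finset.card_eq_sum_card_fiberwise hmaps
  have hfiber : ∀ x ∈ T, ((Finset.univ : Finset (Equiv.Perm (Fin n))).filter
      (fun σ : Equiv.Perm (Fin n) => x₀ ∘ ⇑σ = x)).card = ∏ a, (c a).factorial := by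
    intro x hx
    have hx' : ∀ a, ((Finset.univ : Finset (Fin n)).filter (fun i => x i = a)).card = c a :=
      (Finset.mem_filter.mp hx).2
    -- fiber equivalences
    have hFcard : ∀ a : X, Fintype.card {i : Fin n // x i = a} =
        Fintype.card {i : Fin n // x₀ i = a} := by
      intro a
      rw [Fintype.card_subtype, Fintype.card_subtype, hx' a, hx₀ a]
    let F : ∀ a : X, {i : Fin n // x i = a} ≃ {i : Fin n // x₀ i = a} :=
      fun a => Fintype.equivOfCardEq (hFcard a)
    let τ : Equiv.Perm (Fin n) :=
      ((Equiv.sigmaFiberEquiv x).symm.trans (Equiv.sigmaCongrRight F)).trans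
        (Equiv.sigmaFiberEquiv x₀)
    have hτ : ∀ i, x₀ (τ i) = x i := by
      intro i
      have h2 : τ i = (F (x i) ⟨i, rfl⟩ : {j : Fin n // x₀ j = x i}).1 := rfl
      rw [h2]
      exact (F (x i) ⟨i, rfl⟩).2
    have hequiv : {σ : Equiv.Perm (Fin n) // x₀ ∘ σ = x} ≃
        {ρ : Equiv.Perm (Fin n) // x₀ ∘ ρ = x₀} := by
      refine (Equiv.mulRight τ⁻¹).subtypeEquiv fun σ => ?_
      constructor
      · intro h
        funext i
        have h1 : x₀ (σ (τ.symm i)) = x (τ.symm i) := congrFun h (τ.symm i)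
        have h2 : x (τ.symm i) = x₀ i := by rw [← hτ (τ.symm i), Equiv.apply_symm_apply]
        simpa [Equiv.Perm.mul_apply] using h1.trans h2
      · intro h
        funext i
        have h1 : x₀ ((σ * τ⁻¹) (τ i)) = x₀ (τ i) := congrFun h (τ i)
        have h2 : (σ * τ⁻¹) (τ i) = σ i := by
          simp [Equiv.Perm.mul_apply]
        rw [h2] at h1
        rw [Function.comp_apply, h1, hτ]
    have hcard2 : Fintype.card {σ : Equiv.Perm (Fin n) // x₀ ∘ ⇑σ = x} =
        ∏ a, (c a).factorial := by
      rw [Fintype.card_congr hequiv, DomMulAct.stabilizer_card]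
      exact Finset.prod_congr rfl fun a _ => by rw [Fintype.card_subtype, hx₀]
    rw [← hcard2]
    exact (Fintype.card_subtype _).symm
  have hcardperm : (Finset.univ : Finset (Equiv.Perm (Fin n))).card = n.factorial := by
    rw [Finset.card_univ, Fintype.card_perm, Fintype.card_fin]
  rw [← hcardperm, hsplit, Finset.sum_congr rfl hfiber, Finset.sum_const, smul_eq_mul]

/-- Probability of a type class under an i.i.d. distribution `P`:
`(n+1)^{-|X|} exp(-n D(Q‖P)) ≤ Pr[sample has type Q] ≤ exp(-n D(Q‖P))`, where
`Q a = c a / n` and `D` is the Kullback–Leibler divergence. -/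
theorem stmt_2 (X : Type*) [Fintype X] [DecidableEq X] (n : ℕ) (hn : 0 < n)
    (P : X → ℝ) (hP0 : ∀ a, 0 ≤ P a) (hP1 : ∑ a, P a = 1)
    (c : X → ℕ) (hc : ∑ a, c a = n) (hsupp : ∀ a, 0 < c a → 0 < P a) :
    let T : Finset (Fin n → X) :=
      Finset.univ.filter (fun x => ∀ a, ((Finset.univ : Finset (Fin n)).filter
        (fun i => x i = a)).card = c a)
    let D : ℝ := ∑ a, ((c a : ℝ) / n) * Real.log (((c a : ℝ) / n) / P a)
    ((n : ℝ) + 1)⁻¹ ^ Fintype.card X * Real.exp (-(n * D)) ≤ ∑ x ∈ T, ∏ i, P (x i) ∧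
      ∑ x ∈ T, ∏ i, P (x i) ≤ Real.exp (-(n * D)) := by
  classical
  intro T D
  have hn' : (0:ℝ) < n := by exact_mod_cast hn
  have hnne : (n:ℝ) ≠ 0 := ne_of_gt hn'
  -- generic grouping of products over fibers
  have prod_eq : ∀ (f : X → ℝ) (x : Fin n → X),
      ∏ i, f (x i) = ∏ a, f a ^ ((Finset.univ : Finset (Fin n)).filter
        (fun i => x i = a)).card := by
    intro f x
    rw [← Finset.prod_fiberwise_of_maps_to (fun i _ => Finset.mem_univ (x i))
      (fun i => f (x i))]
    refine Finset.prod_congr rfl fun a _ => ?_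
    have hcg : ∀ i ∈ Finset.univ.filter (fun i : Fin n => x i = a), f (x i) = f a :=
      fun i hi => by rw [(Finset.mem_filter.mp hi).2]
    rw [Finset.prod_congr rfl hcg, Finset.prod_const]
  set N : ℕ := T.card with hN
  set Pp : ℝ := ∏ a, P a ^ c a with hPp
  set K : ℝ := ∏ a, ((n:ℝ) / c a) ^ c a with hK
  set Qp : ℝ := ∏ a, ((c a : ℝ) / n) ^ c a with hQp
  have hPp0 : 0 ≤ Pp := Finset.prod_nonneg fun a _ => pow_nonneg (hP0 a) _
  have hK0 : 0 < K := Finset.prod_pos fun a _ => by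
    rcases Nat.eq_zero_or_pos (c a) with h | h
    · simp [h]
    · have : (0:ℝ) < c a := by exact_mod_cast h
      positivity
  have hQp0 : 0 < Qp := Finset.prod_pos fun a _ => by
    rcases Nat.eq_zero_or_pos (c a) with h | h
    · simp [h]
    · have : (0:ℝ) < c a := by exact_mod_cast h
      positivity
  have hKQ : K * Qp = 1 := by
    rw [hK, hQp, ← Finset.prod_mul_distrib]
    refine Finset.prod_eq_one fun a _ => ?_
    rcases Nat.eq_zero_or_pos (c a) with h | h
    · simp [h]
    · have hca : (0:ℝ) < c a := by exact_mod_cast h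
      rw [← mul_pow, div_mul_div_comm, mul_comm (n:ℝ) _, div_self (by positivity), one_pow]
  -- sum over T
  have sumT : ∑ x ∈ T, ∏ i, P (x i) = (N:ℝ) * Pp := by
    rw [Finset.sum_congr rfl (fun x hx => ?_), Finset.sum_const, nsmul_eq_mul]
    rw [prod_eq P x]
    exact Finset.prod_congr rfl fun a _ => by rw [(Finset.mem_filter.mp hx).2 a]
  -- exp rewrite
  have hexp : Real.exp (-((n:ℝ) * D)) = Pp * K := by
    have hD : -((n:ℝ) * D) = ∑ a, (c a : ℝ) * Real.log (((n:ℝ) * P a) / c a) := by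
      rw [Finset.mul_sum, ← Finset.sum_neg_distrib]
      refine Finset.sum_congr rfl fun a _ => ?_
      rcases Nat.eq_zero_or_pos (c a) with h | h
      · simp [h]
      · have hP : 0 < P a := hsupp a h
        have hca : (0:ℝ) < c a := by exact_mod_cast h
        have h1 : ((c a : ℝ)/n / P a)⁻¹ = ((n:ℝ) * P a) / c a := by
          field_simp
        rw [← h1, Real.log_inv]
        field_simp
        try ring
    rw [hD, Real.exp_sum]
    rw [hPp, hK, ← Finset.prod_mul_distrib]
    refine Finset.prod_congr rfl fun a _ => ?_
    rcases Nat.eq_zero_or_pos (c a) with h | h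
    · simp [h]
    · have hP : 0 < P a := hsupp a h
      have hca : (0:ℝ) < c a := by exact_mod_cast h
      rw [← Real.log_pow, Real.exp_log (by positivity), ← mul_pow]
      congr 1
      field_simp
      try ring
  -- total probability under Q is 1
  have hQ1 : ∑ a, (c a : ℝ) / n = 1 := by
    rw [← Finset.sum_div]
    rw [show ∑ a, (c a : ℝ) = (n:ℝ) by exact_mod_cast congrArg Nat.cast hc]
    exact div_self hnne
  have htot : ∑ x : Fin n → X, ∏ i, ((c (x i) : ℝ) / n) = 1 := by
    have hps := Finset.prod_univ_sum (fun _ : Fin n => (Finset.univ : Finset X))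
      (fun _ a => (c a : ℝ) / n)
    rw [← Fintype.piFinset_univ, ← hps]
    simp [hQ1]
  -- upper bound piece : N * Qp ≤ 1
  have hNQp : (N:ℝ) * Qp ≤ 1 := by
    have h1 : ∑ x ∈ T, ∏ i, ((c (x i) : ℝ) / n) = (N:ℝ) * Qp := by
      rw [Finset.sum_congr rfl (fun x hx => ?_), Finset.sum_const, nsmul_eq_mul]
      rw [prod_eq (fun a => (c a : ℝ)/n) x]
      exact Finset.prod_congr rfl fun a _ => by rw [(Finset.mem_filter.mp hx).2 a]
    rw [← h1, ← htot]
    refine Finset.sum_le_sum_of_subset_of_nonneg (Finset.subset_univ T) fun x _ _ => ?_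
    exact Finset.prod_nonneg fun i _ => by positivity
  -- counting for c
  have hcount : N * ∏ a, (c a).factorial = n.factorial := count_lemma n c hc
  -- lower bound piece : 1 ≤ (n+1)^|X| * (N * Qp)
  have hlow : (1:ℝ) ≤ ((n:ℝ) + 1) ^ Fintype.card X * ((N:ℝ) * Qp) := by
    set B : Finset (X → ℕ) := Fintype.piFinset fun _ : X => Finset.range (n+1) with hB
    have hmapsB : ∀ x ∈ (Finset.univ : Finset (Fin n → X)),
        (fun a => ((Finset.univ : Finset (Fin n)).filter (fun i => x i = a)).card) ∈ B := by
      intro x _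
      rw [hB, Fintype.mem_piFinset]
      intro a
      rw [Finset.mem_range, Nat.lt_succ_iff]
      exact le_trans (Finset.card_le_card (Finset.filter_subset _ _)) (by simp)
    have hsplit := Finset.sum_fiberwise_of_maps_to hmapsB
      (fun x : Fin n → X => ∏ i, ((c (x i) : ℝ) / n))
    have hinner : ∀ b ∈ B, (∑ x ∈ Finset.univ.filter (fun x : Fin n → X =>
        (fun a => ((Finset.univ : Finset (Fin n)).filter (fun i => x i = a)).card) = b),
        ∏ i, ((c (x i) : ℝ) / n)) ≤ (N:ℝ) * Qp := by
      intro b _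
      set Tb := Finset.univ.filter (fun x : Fin n → X =>
        (fun a => ((Finset.univ : Finset (Fin n)).filter (fun i => x i = a)).card) = b) with hTb
      rcases Finset.eq_empty_or_nonempty Tb with h | h
      · rw [h]; simp; positivity
      · obtain ⟨x₁, hx₁⟩ := h
        have hx₁' : ∀ a, ((Finset.univ : Finset (Fin n)).filter (fun i => x₁ i = a)).card = b a :=
          fun a => congrFun (Finset.mem_filter.mp hx₁).2 a
        have hbn : ∑ a, b a = n := by
          rw [← Finset.sum_congr rfl (fun a _ => hx₁' a)]
          rw [← Finset.card_eq_sum_card_fiberwise (fun i _ => Finset.mem_univ (x₁ i))]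
          simp
        have hTbeq : Tb = Finset.univ.filter (fun x : Fin n → X =>
            ∀ a, ((Finset.univ : Finset (Fin n)).filter (fun i => x i = a)).card = b a) := by
          apply Finset.filter_congr
          intro x _
          simp [funext_iff]
        have hcountb : Tb.card * ∏ a, (b a).factorial = n.factorial := by
          rw [hTbeq]; exact count_lemma n b hbn
        have hnat : Tb.card * ∏ a, c a ^ b a ≤ N * ∏ a, c a ^ c a :=
          nat_maxlike c b n N Tb.card hcount hcountb
        have hsum : ∑ x ∈ Tb, ∏ i, ((c (x i) : ℝ) / n) =
            (Tb.card : ℝ) * ∏ a, ((c a : ℝ)/n) ^ b a := by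
          rw [Finset.sum_congr rfl (fun x hx => ?_), Finset.sum_const, nsmul_eq_mul]
          rw [prod_eq (fun a => (c a : ℝ)/n) x]
          exact Finset.prod_congr rfl fun a _ => by
            rw [congrFun (Finset.mem_filter.mp hx).2 a]
        have key : ∀ (d : X → ℕ), (∑ a, d a = n) → ∀ (M : ℕ),
            (M:ℝ) * ∏ a, ((c a : ℝ)/n) ^ d a = ((M * ∏ a, c a ^ d a : ℕ) : ℝ) / (n:ℝ)^n := by
          intro d hd M
          have hprod : ∏ a, ((c a : ℝ)/n) ^ d a = (∏ a, (c a : ℝ) ^ d a) / (n:ℝ)^n := by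
            have h1 : ∏ a, ((c a : ℝ)/n) ^ d a =
                (∏ a, (c a : ℝ) ^ d a) / ∏ a, (n:ℝ) ^ d a := by
              rw [← Finset.prod_div_distrib]
              exact Finset.prod_congr rfl fun a _ => (div_pow _ _ _)
            rw [h1, Finset.prod_pow_eq_pow_sum, hd]
          rw [hprod]
          push_cast
          ring
        calc ∑ x ∈ Tb, ∏ i, ((c (x i) : ℝ) / n)
            = (Tb.card : ℝ) * ∏ a, ((c a : ℝ)/n) ^ b a := hsum
          _ = ((Tb.card * ∏ a, c a ^ b a : ℕ) : ℝ) / (n:ℝ)^n := key b hbn _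
          _ ≤ ((N * ∏ a, c a ^ c a : ℕ) : ℝ) / (n:ℝ)^n := by
              have hnat' : ((Tb.card * ∏ a, c a ^ b a : ℕ) : ℝ) ≤
                  ((N * ∏ a, c a ^ c a : ℕ) : ℝ) := by exact_mod_cast hnat
              have hnn : (0:ℝ) < (n:ℝ)^n := by positivity
              gcongr
          _ = (N:ℝ) * Qp := (key c hc N).symm
    have hcardB : B.card = (n+1) ^ Fintype.card X := by
      rw [hB, Fintype.card_piFinset]
      simp [Finset.card_range, Finset.prod_const]
    calc (1:ℝ) = ∑ x : Fin n → X, ∏ i, ((c (x i) : ℝ) / n) := htot.symm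
      _ = ∑ b ∈ B, ∑ x ∈ Finset.univ.filter (fun x : Fin n → X =>
            (fun a => ((Finset.univ : Finset (Fin n)).filter (fun i => x i = a)).card) = b),
            ∏ i, ((c (x i) : ℝ) / n) := hsplit.symm
      _ ≤ ∑ b ∈ B, (N:ℝ) * Qp := Finset.sum_le_sum hinner
      _ = (B.card : ℝ) * ((N:ℝ) * Qp) := by rw [Finset.sum_const, nsmul_eq_mul]
      _ = ((n:ℝ) + 1) ^ Fintype.card X * ((N:ℝ) * Qp) := by rw [hcardB]; push_cast; ring
  constructor
  · -- lower bound
    rw [sumT, hexp]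
    set A : ℝ := ((n:ℝ)+1) ^ Fintype.card X with hA
    have hA0 : 0 < A := by positivity
    have hKA : K ≤ A * N := by
      calc K = K * 1 := (mul_one K).symm
        _ ≤ K * (A * ((N:ℝ) * Qp)) := mul_le_mul_of_nonneg_left hlow (le_of_lt hK0)
        _ = A * (N:ℝ) * (K * Qp) := by ring
        _ = A * N := by rw [hKQ, mul_one]
    have hinv : A⁻¹ * K ≤ (N:ℝ) := by
      have h2 := mul_le_mul_of_nonneg_left hKA (le_of_lt (inv_pos.mpr hA0))
      rwa [← mul_assoc, inv_mul_cancel₀ (ne_of_gt hA0), one_mul] at h2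
    calc ((n:ℝ)+1)⁻¹ ^ Fintype.card X * (Pp * K) = (A⁻¹ * K) * Pp := by
          rw [hA, inv_pow]; ring
      _ ≤ (N:ℝ) * Pp := mul_le_mul_of_nonneg_right hinv hPp0
  · -- upper bound
    rw [sumT, hexp]
    have hNK : (N:ℝ) ≤ K := by
      calc (N:ℝ) = (N:ℝ) * (Qp * K) := by rw [mul_comm Qp K, hKQ, mul_one]
        _ = (N:ℝ) * Qp * K := by ring
        _ ≤ 1 * K := mul_le_mul_of_nonneg_right hNQp (le_of_lt hK0)
        _ = K := one_mul K
    calc (N:ℝ) * Pp ≤ K * Pp := mul_le_mul_of_nonneg_right hNK hPp0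
      _ = Pp * K := mul_comm _ _
end

section
/- Variational formula for classical Rényi divergence: for probability distributions P, Q on a finite set X and any real s > −1, min over probability distributions R on X of [D(R‖P) + s·D(R‖Q)] equals s·D_{1/(1+s)}(P‖Q), where D_α(P‖Q) = (1/(α−1))·log ∑_x P(x)^α Q(x)^{1−α}. -/
/-!
Put `α = 1/(1+s)`, `Z = ∑ₓ P(x)^α Q(x)^{1-α}` and let `T = P^α Q^{1-α} / Z` be the normalised
geometric mixture of `P` and `Q`. Since `(1+s)·log T = log P + s·log Q - (1+s)·log Z`, every `R`
satisfies `D(R‖P) + s·D(R‖Q) = (1+s)·(D(R‖T) - log Z)`. By Gibbs' inequality this is minimised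
at `R = T`, with value `-(1+s)·log Z = s·D_α(P‖Q)`.
-/

open Real Finset

noncomputable section RenyiVariational

variable {X : Type*} [Fintype X]

def relEntropy (R P : X → ℝ) : ℝ := ∑ x, R x * log (R x / P x)

def renyiSum (P Q : X → ℝ) (α : ℝ) : ℝ := ∑ x, P x ^ α * Q x ^ (1 - α)

def renyiDiv (P Q : X → ℝ) (α : ℝ) : ℝ := 1 / (α - 1) * log (renyiSum P Q α)

def geomMix (P Q : X → ℝ) (α : ℝ) (x : X) : ℝ := P x ^ α * Q x ^ (1 - α) / renyiSum P Q α

lemma sub_le_mul_log_div {r t : ℝ} (hr : 0 ≤ r) (ht : 0 < t) : r - t ≤ r * log (r / t) := by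
  rcases hr.eq_or_lt with rfl | hr
  · simpa using ht.le
  calc r - t = r * (1 - (r / t)⁻¹) := by field_simp
    _ ≤ r * log (r / t) :=
      mul_le_mul_of_nonneg_left (one_sub_inv_le_log_of_pos (by positivity)) hr.le

lemma relEntropy_nonneg {R T : X → ℝ} (hR : ∀ x, 0 ≤ R x) (hT : ∀ x, 0 < T x)
    (hRT : ∑ x, R x = ∑ x, T x) : 0 ≤ relEntropy R T :=
  calc 0 = ∑ x, (R x - T x) := by rw [sum_sub_distrib, hRT, sub_self]
    _ ≤ relEntropy R T := sum_le_sum fun x _ ↦ sub_le_mul_log_div (hR x) (hT x)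

lemma relEntropy_self (R : X → ℝ) : relEntropy R R = 0 := by
  simp [relEntropy]

lemma renyiSum_pos [Nonempty X] {P Q : X → ℝ} (hP : ∀ x, 0 < P x) (hQ : ∀ x, 0 < Q x) (α : ℝ) :
    0 < renyiSum P Q α :=
  sum_pos (fun x _ ↦ mul_pos (rpow_pos_of_pos (hP x) _) (rpow_pos_of_pos (hQ x) _)) univ_nonempty

lemma renyiSum_one (P Q : X → ℝ) : renyiSum P Q 1 = ∑ x, P x := by
  simp [renyiSum]

lemma geomMix_pos [Nonempty X] {P Q : X → ℝ} (hP : ∀ x, 0 < P x) (hQ : ∀ x, 0 < Q x) (α : ℝ)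
    (x : X) : 0 < geomMix P Q α x :=
  div_pos (mul_pos (rpow_pos_of_pos (hP x) _) (rpow_pos_of_pos (hQ x) _)) (renyiSum_pos hP hQ α)

lemma sum_geomMix [Nonempty X] {P Q : X → ℝ} (hP : ∀ x, 0 < P x) (hQ : ∀ x, 0 < Q x) (α : ℝ) :
    ∑ x, geomMix P Q α x = 1 := by
  simp only [geomMix]
  rw [← sum_div, ← renyiSum, div_self (renyiSum_pos hP hQ α).ne']

lemma log_geomMix [Nonempty X] {P Q : X → ℝ} (hP : ∀ x, 0 < P x) (hQ : ∀ x, 0 < Q x) (α : ℝ)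
    (x : X) :
    log (geomMix P Q α x) = α * log (P x) + (1 - α) * log (Q x) - log (renyiSum P Q α) := by
  rw [geomMix, log_div (mul_pos (rpow_pos_of_pos (hP x) _) (rpow_pos_of_pos (hQ x) _)).ne'
      (renyiSum_pos hP hQ α).ne', log_mul (rpow_pos_of_pos (hP x) _).ne'
      (rpow_pos_of_pos (hQ x) _).ne', log_rpow (hP x), log_rpow (hQ x)]

lemma relEntropy_add_mul_relEntropy [Nonempty X] {P Q R : X → ℝ} (hP : ∀ x, 0 < P x)
    (hQ : ∀ x, 0 < Q x) (hR1 : ∑ x, R x = 1) {s : ℝ} (hs : 1 + s ≠ 0) :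
    relEntropy R P + s * relEntropy R Q =
      (1 + s) * (relEntropy R (geomMix P Q (1 / (1 + s))) - log (renyiSum P Q (1 / (1 + s)))) := by
  have hterm : ∀ x, R x * log (R x / P x) + s * (R x * log (R x / Q x)) =
      (1 + s) * (R x * log (R x / geomMix P Q (1 / (1 + s)) x) -
        R x * log (renyiSum P Q (1 / (1 + s)))) := by
    intro x
    rcases eq_or_ne (R x) 0 with hRx | hRx
    · simp [hRx]
    rw [log_div hRx (hP x).ne', log_div hRx (hQ x).ne',
      log_div hRx (geomMix_pos hP hQ _ x).ne', log_geomMix hP hQ]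
    field_simp
    ring
  rw [relEntropy, relEntropy, relEntropy, mul_sum, ← sum_add_distrib,
    sum_congr rfl fun x _ ↦ hterm x, ← mul_sum, sum_sub_distrib, ← sum_mul, hR1, one_mul]

lemma mul_renyiDiv_one_div_one_add {P Q : X → ℝ} (hP1 : ∑ x, P x = 1) {s : ℝ} (hs : 1 + s ≠ 0) :
    s * renyiDiv P Q (1 / (1 + s)) = -(1 + s) * log (renyiSum P Q (1 / (1 + s))) := by
  rcases eq_or_ne s 0 with rfl | hs0
  · simp [renyiSum_one, hP1]
  have hcoef : s * (1 / (1 / (1 + s) - 1)) = -(1 + s) := by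
    field_simp
    simp [hs0]
  rw [renyiDiv, ← mul_assoc, hcoef]

end RenyiVariational

theorem stmt_10_general {X : Type*} [Fintype X] [Nonempty X]
    (P Q : X → ℝ) (hP : ∀ x, 0 < P x) (hQ : ∀ x, 0 < Q x)
    (hP1 : ∑ x, P x = 1) (s : ℝ) (hs : -1 < s) :
    IsLeast {v : ℝ | ∃ R : X → ℝ, (∀ x, 0 ≤ R x) ∧ ∑ x, R x = 1 ∧
        v = (∑ x, R x * Real.log (R x / P x)) + s * ∑ x, R x * Real.log (R x / Q x)}
      (s * ((1 / (1 / (1 + s) - 1)) *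
        Real.log (∑ x, P x ^ ((1 : ℝ) / (1 + s)) * Q x ^ (1 - (1 : ℝ) / (1 + s))))) := by
  have hs1 : 0 < 1 + s := by linarith
  change IsLeast {v | ∃ R : X → ℝ, (∀ x, 0 ≤ R x) ∧ ∑ x, R x = 1 ∧
    v = relEntropy R P + s * relEntropy R Q} (s * renyiDiv P Q (1 / (1 + s)))
  rw [mul_renyiDiv_one_div_one_add hP1 hs1.ne']
  constructor
  · have hT1 := sum_geomMix hP hQ (1 / (1 + s))
    refine ⟨_, fun x ↦ (geomMix_pos hP hQ _ x).le, hT1, ?_⟩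
    rw [relEntropy_add_mul_relEntropy hP hQ hT1 hs1.ne', relEntropy_self]
    ring
  · rintro v ⟨R, hR, hR1, rfl⟩
    rw [relEntropy_add_mul_relEntropy hP hQ hR1 hs1.ne']
    have hgibbs := relEntropy_nonneg hR (geomMix_pos hP hQ (1 / (1 + s)))
      (hR1.trans (sum_geomMix hP hQ _).symm)
    nlinarith

/-- Variational formula for the classical Rényi divergence: for distributions `P, Q` on a
finite set and `s > -1`, the minimum over distributions `R` of `D(R‖P) + s·D(R‖Q)` equals
`s·D_{1/(1+s)}(P‖Q)`, where `D_α(P‖Q) = (1/(α-1)) log ∑_x P(x)^α Q(x)^{1-α}`. -/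
theorem stmt_10 {X : Type*} [Fintype X] [Nonempty X]
    (P Q : X → ℝ) (hP : ∀ x, 0 < P x) (hQ : ∀ x, 0 < Q x)
    (hP1 : ∑ x, P x = 1) (hQ1 : ∑ x, Q x = 1) (s : ℝ) (hs : -1 < s) :
    IsLeast {v : ℝ | ∃ R : X → ℝ, (∀ x, 0 ≤ R x) ∧ ∑ x, R x = 1 ∧
        v = (∑ x, R x * Real.log (R x / P x)) + s * ∑ x, R x * Real.log (R x / Q x)}
      (s * ((1 / (1 / (1 + s) - 1)) *
        Real.log (∑ x, P x ^ ((1 : ℝ) / (1 + s)) * Q x ^ (1 - (1 : ℝ) / (1 + s))))) :=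
  stmt_10_general P Q hP hQ hP1 s hs
end

section
/- Ky Fan minimax: Let X be a compact convex subset of a topological vector space and Y a convex subset of a vector space. If f : X × Y → ℝ is such that y ↦ f(x,y) is concave and upper semicontinuous for each x ∈ X, and x ↦ f(x,y) is convex and lower semicontinuous for each y ∈ Y, then min_{x∈X} sup_{y∈Y} f(x,y) = sup_{y∈Y} min_{x∈X} f(x,y). -/
/-!
Fix a real `c` above `sup_y min_x f`, so that each sublevel set `{x ∈ X | f x y ≤ c}` is
nonempty; it is closed in the compact `X`, so it suffices that finitely many of them,
for `y₁, …, yₙ`, meet. If they did not, the convex upper set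
`S = {z ∈ ℝⁿ | ∃ x ∈ X, ∀ i, f x yᵢ ≤ zᵢ}` would stay away from the diagonal point `(c, …, c)`,
because `x ↦ maxᵢ f x yᵢ` attains a minimum `> c` on `X`. A hyperplane separating them has a
normal with nonnegative coordinates, as `S` is an upper set; normalised, they are weights `wᵢ`
such that `∑ wᵢ f x yᵢ` stays uniformly above `c` on `X`, and concavity transfers this to
`f x (∑ wᵢ yᵢ)`, contradicting the choice of `c`.
-/

open Set

theorem LinearMap.apply_eq_dotProduct_single {ι : Type*} [Fintype ι] [DecidableEq ι]
    (φ : (ι → ℝ) →ₗ[ℝ] ℝ) (z : ι → ℝ) : φ z = (fun i => φ (Pi.single i 1)) ⬝ᵥ z := by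
  conv_lhs => rw [← Finset.univ_sum_single z]
  simp only [map_sum, dotProduct, mul_comm]
  refine Finset.sum_congr rfl fun i _ => ?_
  rw [← smul_eq_mul, ← map_smul, ← Pi.single_smul', smul_eq_mul, mul_one]

theorem IsUpperSet.map_single_one_nonneg {ι : Type*} [DecidableEq ι] {S : Set (ι → ℝ)}
    (hS : IsUpperSet S) (φ : (ι → ℝ) →ₗ[ℝ] ℝ) {u : ℝ} (hφS : ∀ z ∈ S, u < φ z)
    {z : ι → ℝ} (hz : z ∈ S) (i : ι) : 0 ≤ φ (Pi.single i 1) := by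
  by_contra! hneg
  -- moving from `z` along the `i`-th axis by `t` brings `φ` down to exactly `u`
  set t := (φ z - u) / -φ (Pi.single i 1)
  have ht : 0 ≤ t := div_nonneg (sub_nonneg.2 (hφS z hz).le) (neg_nonneg.2 hneg.le)
  have hzt : z + t • Pi.single i 1 ∈ S := hS (le_add_of_nonneg_right fun j => by
    rcases eq_or_ne j i with rfl | hj <;> simp [*]) hz
  have hφzt : φ (z + t • Pi.single i 1) = u := by
    simp only [map_add, map_smul, smul_eq_mul, t]
    field_simp [hneg.ne]
    ring
  exact (hφS _ hzt).ne' hφzt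

theorem Convex.exists_stdSimplex_separation_of_isUpperSet {ι : Type*} [Fintype ι]
    {S : Set (ι → ℝ)} (hS : Convex ℝ S) (hSu : IsUpperSet S) (hSne : S.Nonempty) {p : ι → ℝ}
    (hp : p ∉ closure S) : ∃ w ∈ stdSimplex ℝ ι, ∃ a, w ⬝ᵥ p < a ∧ ∀ z ∈ S, a < w ⬝ᵥ z := by
  classical
  obtain ⟨φ, u, hφp, hφS⟩ := geometric_hahn_banach_point_closed hS.closure isClosed_closure hp
  replace hφS : ∀ z ∈ S, u < φ z := fun z hz => hφS z (subset_closure hz)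
  set v : ι → ℝ := fun i => φ (Pi.single i 1)
  have hφ (z : ι → ℝ) : φ z = v ⬝ᵥ z := φ.toLinearMap.apply_eq_dotProduct_single z
  obtain ⟨z₀, hz₀⟩ := hSne
  have hv (i : ι) : 0 ≤ v i := hSu.map_single_one_nonneg φ.toLinearMap hφS hz₀ i
  have hsum : 0 < ∑ i, v i := by
    refine (Finset.sum_nonneg fun i _ => hv i).lt_of_ne fun h => ?_
    have hv0 : v = 0 := funext fun i =>
      (Finset.sum_eq_zero_iff_of_nonneg fun i _ => hv i).1 h.symm i (Finset.mem_univ i)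
    have := hφS z₀ hz₀
    simp only [hφ, hv0, zero_dotProduct] at this hφp
    linarith
  refine ⟨(∑ i, v i)⁻¹ • v, ⟨fun i => mul_nonneg (inv_nonneg.2 hsum.le) (hv i), ?_⟩,
    (∑ i, v i)⁻¹ * u, ?_, fun z hz => ?_⟩
  · simp [← Finset.mul_sum, hsum.ne']
  · rw [smul_dotProduct, ← hφ, smul_eq_mul]
    exact mul_lt_mul_of_pos_left hφp (inv_pos.2 hsum)
  · rw [smul_dotProduct, ← hφ, smul_eq_mul]
    exact mul_lt_mul_of_pos_left (hφS z hz) (inv_pos.2 hsum)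

theorem convex_setOf_exists_mem_forall_le {ι E : Type*} [AddCommGroup E] [Module ℝ E]
    {X : Set E} (hX : Convex ℝ X) {g : ι → E → ℝ} (hg : ∀ i, ConvexOn ℝ X (g i)) :
    Convex ℝ {z : ι → ℝ | ∃ x ∈ X, ∀ i, g i x ≤ z i} := by
  rintro z ⟨x, hx, hz⟩ z' ⟨x', hx', hz'⟩ a b ha hb hab
  refine ⟨a • x + b • x', hX hx hx' ha hb hab, fun i => ?_⟩
  calc g i (a • x + b • x') ≤ a * g i x + b * g i x' := (hg i).2 hx hx' ha hb hab
    _ ≤ a * z i + b * z' i := by gcongr; exacts [hz i, hz' i]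
    _ = (a • z + b • z') i := rfl

theorem const_notMem_closure_of_forall_exists_le {ι : Type*} [Finite ι] {S : Set (ι → ℝ)}
    {m c : ℝ} (hS : ∀ z ∈ S, ∃ i, m ≤ z i) (hcm : c < m) : (fun _ => c) ∉ closure S := by
  have hclosed : IsClosed (⋃ i, {z : ι → ℝ | m ≤ z i}) :=
    isClosed_iUnion_of_finite fun i => isClosed_le continuous_const (continuous_apply i)
  intro hmem
  obtain ⟨i, hi⟩ :=
    mem_iUnion.1 (closure_minimal (fun z hz => mem_iUnion.2 (hS z hz)) hclosed hmem)
  exact hcm.not_ge hi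

theorem exists_forall_le_of_forall_exists_le {ι V W : Type*} [Fintype ι]
    [AddCommGroup V] [Module ℝ V] [TopologicalSpace V] [AddCommGroup W] [Module ℝ W]
    {Xs : Set V} {Ys : Set W} (hXc : IsCompact Xs) (hXconv : Convex ℝ Xs) (hXne : Xs.Nonempty)
    (hYconv : Convex ℝ Ys) {f : V → W → ℝ}
    (hconc : ∀ x ∈ Xs, ConcaveOn ℝ Ys (f x))
    (hconv : ∀ y ∈ Ys, ConvexOn ℝ Xs (fun x => f x y))
    (hlsc : ∀ y ∈ Ys, LowerSemicontinuousOn (fun x => f x y) Xs)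
    {c : ℝ} (hc : ∀ y ∈ Ys, ∃ x ∈ Xs, f x y ≤ c) {y : ι → W} (hy : ∀ i, y i ∈ Ys) :
    ∃ x ∈ Xs, ∀ i, f x (y i) ≤ c := by
  by_contra! hcon
  obtain ⟨x₀, hx₀, hmin⟩ := (lowerSemicontinuousOn_ciSup
    (fun x _ => (finite_range fun i => f x (y i)).bddAbove)
    fun i => hlsc _ (hy i)).exists_isMinOn hXne hXc
  obtain ⟨i₀, hi₀⟩ := hcon x₀ hx₀
  have : Nonempty ι := ⟨i₀⟩
  set m := ⨆ i, f x₀ (y i)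
  have hcm : c < m :=
    hi₀.trans_le (le_ciSup (f := fun i => f x₀ (y i)) (finite_range _).bddAbove i₀)
  set S : Set (ι → ℝ) := {z | ∃ x ∈ Xs, ∀ i, f x (y i) ≤ z i}
  have hSconv : Convex ℝ S :=
    convex_setOf_exists_mem_forall_le hXconv fun i => hconv _ (hy i)
  have hSu : IsUpperSet S := by
    rintro z z' hzz' ⟨x, hx, hz⟩
    exact ⟨x, hx, fun i => (hz i).trans (hzz' i)⟩
  have hcS : (fun _ => c) ∉ closure S := by
    refine const_notMem_closure_of_forall_exists_le ?_ hcm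
    rintro z ⟨x, hx, hz⟩
    obtain ⟨i, hi⟩ := exists_eq_ciSup_of_finite (f := fun i => f x (y i))
    exact ⟨i, ((hmin hx : m ≤ ⨆ i, f x (y i)).trans_eq hi.symm).trans (hz i)⟩
  obtain ⟨w, ⟨hw0, hw1⟩, a, hca, haS⟩ :=
    hSconv.exists_stdSimplex_separation_of_isUpperSet hSu ⟨_, x₀, hx₀, fun _ => le_rfl⟩ hcS
  obtain ⟨x, hx, hxc⟩ :=
    hc (∑ i, w i • y i) (hYconv.sum_mem (fun i _ => hw0 i) hw1 fun i _ => hy i)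
  have hwc : w ⬝ᵥ (fun _ => c) = c := by simp [dotProduct, ← Finset.sum_mul, hw1]
  have : a < f x (∑ i, w i • y i) :=
    calc a < w ⬝ᵥ fun i => f x (y i) := haS _ ⟨x, hx, fun _ => le_rfl⟩
      _ ≤ _ := (hconc x hx).le_map_sum (fun i _ => hw0 i) hw1 fun i _ => hy i
  linarith

theorem stmt_11_general {V W : Type*} [AddCommGroup V] [Module ℝ V] [TopologicalSpace V]
    [AddCommGroup W] [Module ℝ W]
    (Xs : Set V) (Ys : Set W) (hXc : IsCompact Xs) (hXconv : Convex ℝ Xs) (hXne : Xs.Nonempty)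
    (hYconv : Convex ℝ Ys)
    (f : V → W → ℝ)
    (hconc : ∀ x ∈ Xs, ConcaveOn ℝ Ys (f x))
    (hconv : ∀ y ∈ Ys, ConvexOn ℝ Xs (fun x => f x y))
    (hlsc : ∀ y ∈ Ys, LowerSemicontinuousOn (fun x => f x y) Xs) :
    ⨅ x ∈ Xs, ⨆ y ∈ Ys, (f x y : EReal) = ⨆ y ∈ Ys, ⨅ x ∈ Xs, (f x y : EReal) := by
  refine le_antisymm (EReal.le_of_forall_lt_iff_le.1 fun c hc => ?_)
    (iSup₂_iInf₂_le_iInf₂_iSup₂ Xs Ys _)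
  have hsub (y : W) (hy : y ∈ Ys) : ∃ x ∈ Xs, f x y ≤ c := by
    have hlt : ⨅ x ∈ Xs, (f x y : EReal) < c :=
      (le_iSup₂ (f := fun y (_ : y ∈ Ys) => ⨅ x ∈ Xs, (f x y : EReal)) y hy).trans_lt hc
    simp only [iInf_lt_iff] at hlt
    obtain ⟨x, hx, hxc⟩ := hlt
    exact ⟨x, hx, EReal.coe_le_coe_iff.1 hxc.le⟩
  obtain ⟨x, hx, hxc⟩ : (Xs ∩ ⋂ y ∈ Ys, (fun x => f x y) ⁻¹' Iic c).Nonempty := by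
    rw [nonempty_iff_ne_empty, Ne,
      LowerSemicontinuousOn.inter_biInter_preimage_Iic_eq_empty_iff_exists_finset hXc hlsc]
    rintro ⟨u, hu⟩
    obtain ⟨x, hx, hxu⟩ := exists_forall_le_of_forall_exists_le hXc hXconv hXne hYconv hconc
      hconv hlsc hsub (y := fun i : u => i.1.1) fun i => i.1.2
    obtain ⟨y, hy, hlt⟩ := hu x hx
    exact (hxu ⟨y, hy⟩).not_gt hlt
  refine (iInf₂_le x hx).trans (iSup₂_le fun y hy => EReal.coe_le_coe_iff.2 ?_)
  simpa using mem_iInter₂.1 hxc y hy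

/-- Ky Fan minimax theorem: for `Xs` compact convex in a topological vector space and `Ys`
convex, if `f` is concave and upper semicontinuous in its second argument and convex and
lower semicontinuous in its first argument, then
`inf_{x ∈ Xs} sup_{y ∈ Ys} f x y = sup_{y ∈ Ys} inf_{x ∈ Xs} f x y` (in the extended reals,
the infima over the compact set being attained). -/
theorem stmt_11 {V W : Type*} [AddCommGroup V] [Module ℝ V] [TopologicalSpace V]
    [IsTopologicalAddGroup V] [ContinuousSMul ℝ V]
    [AddCommGroup W] [Module ℝ W] [TopologicalSpace W]
    (Xs : Set V) (Ys : Set W) (hXc : IsCompact Xs) (hXconv : Convex ℝ Xs) (hXne : Xs.Nonempty)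
    (hYconv : Convex ℝ Ys) (hYne : Ys.Nonempty)
    (f : V → W → ℝ)
    (hconc : ∀ x ∈ Xs, ConcaveOn ℝ Ys (f x))
    (husc : ∀ x ∈ Xs, UpperSemicontinuousOn (f x) Ys)
    (hconv : ∀ y ∈ Ys, ConvexOn ℝ Xs (fun x => f x y))
    (hlsc : ∀ y ∈ Ys, LowerSemicontinuousOn (fun x => f x y) Xs) :
    ⨅ x ∈ Xs, ⨆ y ∈ Ys, (f x y : EReal) = ⨆ y ∈ Ys, ⨅ x ∈ Xs, (f x y : EReal) :=
  stmt_11_general Xs Ys hXc hXconv hXne hYconv f hconc hconv hlsc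
end
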